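/- Let K be a field of characteristic 2 and a, b, c, d ∈ K with a ∉ K² and b ≠ 0. Consider the projective plane quartic C : Y⁴ + a Z⁴ + b X² Y² + c X² Z² + b X³ Z + d X⁴ = 0 over K. Then the unique point of C(K̄) at which all three partial derivatives of the defining polynomial vanish is (0 : a^{1/4} : 1). -/
import Mathlib


open MvPolynomial

/-- The quartic `Y⁴ + a Z⁴ + b X² Y² + c X² Z² + b X³ Z + d X⁴`
(variables `X 0 = X, X 1 = Y, X 2 = Z`). -/
noncomputable def quarticII {R : Type*} [CommRing R] (a b c d : R) : MvPolynomial (Fin 3) R :=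
  (X 1) ^ 4 + C a * (X 2) ^ 4 + C b * (X 0) ^ 2 * (X 1) ^ 2 + C c * (X 0) ^ 2 * (X 2) ^ 2
    + C b * (X 0) ^ 3 * (X 2) + C d * (X 0) ^ 4

lemma evF' {R : Type*} [CommRing R] (a b c d x y z : R) :
    eval ![x,y,z] (quarticII a b c d)
      = y^4 + a*z^4 + b*x^2*y^2 + c*x^2*z^2 + b*x^3*z + d*x^4 := by
  simp [quarticII]

lemma ev0' {R : Type*} [CommRing R] (a b c d x y z : R) (h2 : (2:R) = 0) :
    eval ![x,y,z] (pderiv 0 (quarticII a b c d)) = b * x^2 * z := by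
  simp [quarticII, pderiv_X]
  ring_nf
  linear_combination (b*x*y^2 + c*x*z^2 + b*x^2*z + 2*d*x^3) * h2

lemma ev1' {R : Type*} [CommRing R] (a b c d x y z : R) (h2 : (2:R) = 0) :
    eval ![x,y,z] (pderiv 1 (quarticII a b c d)) = 0 := by
  simp [quarticII, pderiv_X]
  ring_nf
  linear_combination (2*y^3 + b*x^2*y) * h2

lemma ev2' {R : Type*} [CommRing R] (a b c d x y z : R) (h2 : (2:R) = 0) :
    eval ![x,y,z] (pderiv 2 (quarticII a b c d)) = b * x^3 := by
  simp [quarticII, pderiv_X]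
  ring_nf
  linear_combination (2*a*z^3 + c*x^2*z) * h2

lemma aux_sing {A : Type*} [Field A] (h2 : (2:A) = 0) (a b c d : A) (hb : b ≠ 0)
    (t : A) (ht : t ^ 4 = a) (x y z : A) (hxyz : ¬ (x = 0 ∧ y = 0 ∧ z = 0)) :
    ((eval ![x, y, z] (quarticII a b c d) = 0 ∧
      ∀ i : Fin 3, eval ![x, y, z] (pderiv i (quarticII a b c d)) = 0)
      ↔ ∃ e : A, e ≠ 0 ∧ x = 0 ∧ y = e * t ∧ z = e) := by
  constructor
  · rintro ⟨hF, hD⟩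
    have hx : x = 0 := by
      have h := hD 2
      rw [ev2' _ _ _ _ _ _ _ h2] at h
      rcases mul_eq_zero.mp h with h | h
      · exact absurd h hb
      · exact pow_eq_zero_iff (by norm_num) |>.mp h
    subst hx
    rw [evF'] at hF
    have h4 : (y + t*z)^4 = 0 := by
      linear_combination hF + z^4*ht + (2*y^3*t*z + 3*y^2*t^2*z^2 + 2*y*t^3*z^3)*h2
    have hyz : y + t*z = 0 := pow_eq_zero_iff (by norm_num) |>.mp h4
    have hz : z ≠ 0 := by
      intro hz0
      exact hxyz ⟨rfl, by rw [hz0] at hyz; simpa using hyz, hz0⟩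
    exact ⟨z, hz, rfl, by linear_combination hyz - (t*z)*h2, rfl⟩
  · rintro ⟨e, he, rfl, rfl, rfl⟩
    refine ⟨?_, ?_⟩
    · rw [evF']
      linear_combination z^4*ht + a*z^4*h2
    · intro i
      match i with
      | 0 => rw [ev0' _ _ _ _ _ _ _ h2]; ring
      | 1 => rw [ev1' _ _ _ _ _ _ _ h2]
      | 2 => rw [ev2' _ _ _ _ _ _ _ h2]; ring

/-- For `K` of characteristic 2, `a ∉ K²` and `b ≠ 0`, the unique point of the
projective quartic `C : Y⁴ + aZ⁴ + bX²Y² + cX²Z² + bX³Z + dX⁴ = 0` over the algebraic closure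
at which all three partial derivatives of the defining polynomial vanish is `(0 : a^{1/4} : 1)`. -/
theorem stmt_3 {K : Type*} [Field K] [CharP K 2] (a b c d : K)
    (ha : ∀ s : K, s ^ 2 ≠ a) (hb : b ≠ 0)
    (t : AlgebraicClosure K) (ht : t ^ 4 = algebraMap K (AlgebraicClosure K) a) :
    ∀ x y z : AlgebraicClosure K, ¬ (x = 0 ∧ y = 0 ∧ z = 0) →
      ((eval ![x, y, z] (quarticII (algebraMap K (AlgebraicClosure K) a)
            (algebraMap K (AlgebraicClosure K) b) (algebraMap K (AlgebraicClosure K) c)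
            (algebraMap K (AlgebraicClosure K) d)) = 0 ∧
        ∀ i : Fin 3, eval ![x, y, z] (pderiv i (quarticII (algebraMap K (AlgebraicClosure K) a)
            (algebraMap K (AlgebraicClosure K) b) (algebraMap K (AlgebraicClosure K) c)
            (algebraMap K (AlgebraicClosure K) d))) = 0)
        ↔ ∃ e : AlgebraicClosure K, e ≠ 0 ∧ x = 0 ∧ y = e * t ∧ z = e) := by
  haveI : CharP (AlgebraicClosure K) 2 :=
    charP_of_injective_algebraMap (algebraMap K (AlgebraicClosure K)).injective 2
  have h2 : (2 : AlgebraicClosure K) = 0 := by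
    exact_mod_cast CharP.cast_eq_zero (AlgebraicClosure K) 2
  have hb0 : algebraMap K (AlgebraicClosure K) b ≠ 0 :=
    (map_ne_zero_iff _ (algebraMap K (AlgebraicClosure K)).injective).mpr hb
  intro x y z hxyz
  exact aux_sing h2 _ _ _ _ hb0 t ht x y z hxyz
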